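/- arXiv:1704.05656 — 2 statements merged into one kernel-verified Lean document; each statement's English description precedes it below -/
import Mathlib

section
/- Assume the generalised least squares setting with ρ and V continuous on the compact parameter space Θ ⊂ ℝ^k, with ρ injective on Θ (identifiability condition (G3')) and V(θ) positive definite for every θ ∈ Θ. Let θ* ∈ Θ and suppose the random vectors satisfy condition (G1): ρ̂_n → ρ(θ*) in probability as n → ∞ (componentwise convergence in probability of the ℝ^p-valued random vectors). Then the generalised least squares estimator is consistent: θ̂_n → θ* in probability as n → ∞. (Theorem 4.3, consistency part, of 'Generalised least squares estimation of regularly varying space-time processes'.) -/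
open MeasureTheory Matrix

/-- Consistency of the generalised least squares estimator (Theorem 4.3, consistency part, of
"Generalised least squares estimation of regularly varying space-time processes"): under the
identifiability condition (G3'), positive definiteness of the weight matrices, continuity of
the model and the weight matrices on the compact parameter space, and consistency (G1) of the
empirical extremogram, the GLSE converges to the true parameter in probability. -/
theorem glse_consistency {k p : ℕ}
    (Θ : Set (EuclideanSpace ℝ (Fin k))) (hΘc : IsCompact Θ)
    (ρ : EuclideanSpace ℝ (Fin k) → (Fin p → ℝ)) (hρcont : ContinuousOn ρ Θ)
    -- identifiability (G3'): `ρ` is injective on `Θ`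
    (hρinj : Set.InjOn ρ Θ)
    (V : EuclideanSpace ℝ (Fin k) → Matrix (Fin p) (Fin p) ℝ)
    (hVcont : ContinuousOn V Θ) (hVpd : ∀ θ ∈ Θ, (V θ).PosDef)
    (θstar : EuclideanSpace ℝ (Fin k)) (hθstar : θstar ∈ Θ)
    {Ω : Type*} [MeasurableSpace Ω] (μ : Measure Ω) [IsProbabilityMeasure μ]
    (ρhat : ℕ → Ω → (Fin p → ℝ)) (hρhatmeas : ∀ n, Measurable (ρhat n))
    -- (G1): componentwise convergence in probability of the empirical extremogram
    (hG1 : ∀ i : Fin p,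
      TendstoInMeasure μ (fun n ω => ρhat n ω i) Filter.atTop (fun _ => ρ θstar i))
    -- the GLSE: a measurable selection of minimizers of the GLS criterion over `Θ`
    (θhat : ℕ → Ω → EuclideanSpace ℝ (Fin k)) (hθhatmeas : ∀ n, Measurable (θhat n))
    (hmem : ∀ n ω, θhat n ω ∈ Θ)
    (hmin : ∀ n ω, ∀ θ ∈ Θ,
      (ρhat n ω - ρ (θhat n ω)) ⬝ᵥ (V (θhat n ω)).mulVec (ρhat n ω - ρ (θhat n ω))
        ≤ (ρhat n ω - ρ θ) ⬝ᵥ (V θ).mulVec (ρhat n ω - ρ θ)) :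
    TendstoInMeasure μ θhat Filter.atTop (fun _ => θstar) := by
  classical
  rw [tendstoInMeasure_iff_dist]
  intro ε hε
  by_cases hS : ∃ θ₀ ∈ Θ, ε ≤ dist θ₀ θstar
  case neg =>
    push_neg at hS
    have hempty : ∀ n, {ω | ε ≤ dist (θhat n ω) θstar} = (∅ : Set Ω) := by
      intro n
      ext ω
      simp only [Set.mem_setOf_eq, Set.mem_empty_iff_false, iff_false, not_le]
      exact hS _ (hmem n ω)
    simp only [hempty, measure_empty]
    exact tendsto_const_nhds
  obtain ⟨θ₀, hθ₀Θ, hθ₀d⟩ := hS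
  have hθ₀ne : θ₀ ≠ θstar := by
    intro h
    rw [h, dist_self] at hθ₀d
    linarith
  -- p is positive
  have hp : 0 < p := by
    rcases Nat.eq_zero_or_pos p with hp0 | hp0
    · exfalso
      subst hp0
      exact hθ₀ne (hρinj hθ₀Θ hθstar (Subsingleton.elim _ _))
    · exact hp0
  haveI : Nonempty (Fin p) := ⟨⟨0, hp⟩⟩
  -- the compact "far" set S
  set S : Set (EuclideanSpace ℝ (Fin k)) := Θ ∩ {θ | ε ≤ dist θ θstar} with hSdef
  have hSclosed : IsClosed {θ : EuclideanSpace ℝ (Fin k) | ε ≤ dist θ θstar} :=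
    isClosed_le continuous_const (continuous_id.dist continuous_const)
  have hScomp : IsCompact S := hΘc.inter_right hSclosed
  have hSne : S.Nonempty := ⟨θ₀, hθ₀Θ, hθ₀d⟩
  have hSsubΘ : S ⊆ Θ := Set.inter_subset_left
  -- δ : minimal distance of ρ over S from ρ θstar
  have hgc : ContinuousOn (fun θ => ‖ρ θstar - ρ θ‖) S :=
    (ContinuousOn.sub continuousOn_const (hρcont.mono hSsubΘ)).norm
  obtain ⟨θ₁, hθ₁S, hθ₁min⟩ := hScomp.exists_isMinOn hSne hgc
  set δ : ℝ := ‖ρ θstar - ρ θ₁‖ with hδdef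
  have hδpos : 0 < δ := by
    have hne : θ₁ ≠ θstar := by
      intro h
      have h2 := hθ₁S.2
      rw [h] at h2
      simp only [Set.mem_setOf_eq, dist_self] at h2
      linarith
    have hsubne : ρ θstar - ρ θ₁ ≠ 0 := by
      intro h
      exact hne (hρinj (hSsubΘ hθ₁S) hθstar (sub_eq_zero.mp h).symm)
    exact norm_pos_iff.mpr hsubne
  -- uniform coercivity constant c
  have hKcomp : IsCompact (Θ ×ˢ Metric.sphere (0 : Fin p → ℝ) 1) :=
    hΘc.prod (isCompact_sphere 0 1)
  have hKne : (Θ ×ˢ Metric.sphere (0 : Fin p → ℝ) 1).Nonempty := by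
    refine ⟨(θstar, fun _ => (1 : ℝ)), hθstar, ?_⟩
    simp [Metric.mem_sphere, dist_zero_right]
  have hfcont : ContinuousOn
      (fun q : EuclideanSpace ℝ (Fin k) × (Fin p → ℝ) => q.2 ⬝ᵥ (V q.1) *ᵥ q.2)
      (Θ ×ˢ Metric.sphere (0 : Fin p → ℝ) 1) := by
    have hVfst : ContinuousOn
        (fun q : EuclideanSpace ℝ (Fin k) × (Fin p → ℝ) => V q.1)
        (Θ ×ˢ Metric.sphere (0 : Fin p → ℝ) 1) :=
      hVcont.comp continuousOn_fst (fun q hq => hq.1)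
    simp only [dotProduct, Matrix.mulVec]
    apply continuousOn_finset_sum
    intro i _
    apply ContinuousOn.mul
    · exact ((continuous_apply i).comp continuous_snd).continuousOn
    · apply continuousOn_finset_sum
      intro j _
      apply ContinuousOn.mul
      · exact ((continuous_apply j).comp (continuous_apply i)).comp_continuousOn hVfst
      · exact ((continuous_apply j).comp continuous_snd).continuousOn
  obtain ⟨q₁, hq₁K, hq₁min⟩ := hKcomp.exists_isMinOn hKne hfcont
  set c : ℝ := q₁.2 ⬝ᵥ (V q₁.1) *ᵥ q₁.2 with hcdef
  have hcpos : 0 < c := by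
    have hq2ne : q₁.2 ≠ 0 := by
      intro h
      have := hq₁K.2
      rw [Metric.mem_sphere, h, dist_self] at this
      norm_num at this
    have := (hVpd q₁.1 hq₁K.1).dotProduct_mulVec_pos hq2ne
    simpa using this
  -- coercivity : ∀ θ ∈ Θ, ∀ x, c * ‖x‖^2 ≤ x ⬝ᵥ V θ *ᵥ x
  have hcoer : ∀ θ ∈ Θ, ∀ x : Fin p → ℝ, c * ‖x‖ ^ 2 ≤ x ⬝ᵥ (V θ) *ᵥ x := by
    intro θ hθ x
    rcases eq_or_ne x 0 with hx0 | hxne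
    · subst hx0
      simp only [Matrix.mulVec_zero, dotProduct_zero, norm_zero]
      norm_num
    · set u : Fin p → ℝ := ‖x‖⁻¹ • x with hudef
      have hxpos : 0 < ‖x‖ := norm_pos_iff.mpr hxne
      have hu : u ∈ Metric.sphere (0 : Fin p → ℝ) 1 := by
        simp [hudef, Metric.mem_sphere, dist_zero_right, norm_smul,
          abs_of_pos (inv_pos.mpr hxpos), inv_mul_cancel₀ (ne_of_gt hxpos)]
      have hc_le : c ≤ u ⬝ᵥ (V θ) *ᵥ u := hq₁min (Set.mk_mem_prod hθ hu)
      have hkey : u ⬝ᵥ (V θ) *ᵥ u = ‖x‖⁻¹ * ‖x‖⁻¹ * (x ⬝ᵥ (V θ) *ᵥ x) := by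
        simp [hudef, smul_dotProduct, Matrix.mulVec_smul, dotProduct_smul,
          smul_eq_mul]
        ring
      rw [hkey] at hc_le
      have h2 : c * ‖x‖ ^ 2 ≤ ‖x‖⁻¹ * ‖x‖⁻¹ * (x ⬝ᵥ (V θ) *ᵥ x) * ‖x‖ ^ 2 := by
        apply mul_le_mul_of_nonneg_right hc_le (sq_nonneg _)
      calc c * ‖x‖ ^ 2 ≤ ‖x‖⁻¹ * ‖x‖⁻¹ * (x ⬝ᵥ (V θ) *ᵥ x) * ‖x‖ ^ 2 := h2
        _ = x ⬝ᵥ (V θ) *ᵥ x := by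
            have hne' : ‖x‖ ≠ 0 := ne_of_gt hxpos
            field_simp
  -- upper bound for the quadratic form at θstar
  set C : ℝ := ∑ i : Fin p, ∑ j : Fin p, |V θstar i j| with hCdef
  have hCnonneg : 0 ≤ C :=
    Finset.sum_nonneg fun i _ => Finset.sum_nonneg fun j _ => abs_nonneg _
  have hCbound : ∀ x : Fin p → ℝ, x ⬝ᵥ (V θstar) *ᵥ x ≤ C * ‖x‖ ^ 2 := by
    intro x
    have hxi : ∀ i, |x i| ≤ ‖x‖ := by
      intro i
      simpa using norm_le_pi_norm x i
    have : x ⬝ᵥ (V θstar) *ᵥ x = ∑ i, ∑ j, x i * (V θstar i j * x j) := by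
      simp [dotProduct, Matrix.mulVec, Finset.mul_sum]
    rw [this, hCdef, Finset.sum_mul]
    apply Finset.sum_le_sum
    intro i _
    rw [Finset.sum_mul]
    apply Finset.sum_le_sum
    intro j _
    have h1 : x i * (V θstar i j * x j) ≤ |x i * (V θstar i j * x j)| := le_abs_self _
    have h2 : |x i * (V θstar i j * x j)| = |x i| * |V θstar i j| * |x j| := by
      rw [abs_mul, abs_mul]; ring
    have h3 : |x i| * |V θstar i j| * |x j| ≤ ‖x‖ * |V θstar i j| * ‖x‖ := by
      apply mul_le_mul (mul_le_mul_of_nonneg_right (hxi i) (abs_nonneg _)) (hxi j)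
        (abs_nonneg _)
      positivity
    calc x i * (V θstar i j * x j) ≤ |x i| * |V θstar i j| * |x j| := h2 ▸ h1
      _ ≤ ‖x‖ * |V θstar i j| * ‖x‖ := h3
      _ = |V θstar i j| * ‖x‖ ^ 2 := by ring
  -- choose the threshold r₀
  set r₀ : ℝ := (δ / 2) * Real.sqrt (c / (c + C + 1)) with hr₀def
  have hfrac_pos : 0 < c / (c + C + 1) := by positivity
  have hfrac_le : c / (c + C + 1) ≤ 1 := by
    rw [div_le_one (by positivity)]
    linarith
  have hr₀pos : 0 < r₀ := by
    apply mul_pos (by linarith) (Real.sqrt_pos.mpr hfrac_pos)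
  have hr₀le : r₀ ≤ δ / 2 := by
    have : Real.sqrt (c / (c + C + 1)) ≤ 1 := Real.sqrt_le_one.mpr hfrac_le
    calc r₀ = (δ / 2) * Real.sqrt (c / (c + C + 1)) := rfl
      _ ≤ (δ / 2) * 1 := by
          apply mul_le_mul_of_nonneg_left this (by linarith)
      _ = δ / 2 := mul_one _
  have hr₀sq : r₀ ^ 2 = (δ / 2) ^ 2 * (c / (c + C + 1)) := by
    rw [hr₀def, mul_pow, Real.sq_sqrt hfrac_pos.le]
  have hkey : C * r₀ ^ 2 < c * (δ / 2) ^ 2 := by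
    rw [hr₀sq]
    have hδ2 : 0 < (δ / 2) ^ 2 := by positivity
    have hpos : (0:ℝ) < c + C + 1 := by linarith
    have hs : C * (c / (c + C + 1)) < c := by
      rw [← mul_div_assoc, div_lt_iff₀ hpos]
      nlinarith
    calc C * ((δ / 2) ^ 2 * (c / (c + C + 1)))
        = (δ / 2) ^ 2 * (C * (c / (c + C + 1))) := by ring
      _ < (δ / 2) ^ 2 * c := mul_lt_mul_of_pos_left hs hδ2
      _ = c * (δ / 2) ^ 2 := by ring
  -- key inclusion
  have hsubset : ∀ n, {ω | ε ≤ dist (θhat n ω) θstar}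
      ⊆ ⋃ i : Fin p, {ω | r₀ ≤ dist (ρhat n ω i) (ρ θstar i)} := by
    intro n ω hω
    simp only [Set.mem_setOf_eq] at hω
    by_contra hcon
    simp only [Set.mem_iUnion, Set.mem_setOf_eq, not_exists, not_le] at hcon
    have hdistlt : dist (ρhat n ω) (ρ θstar) < r₀ := (dist_pi_lt_iff hr₀pos).mpr hcon
    set θh := θhat n ω with hθhdef
    have hθhS : θh ∈ S := ⟨hmem n ω, hω⟩
    have hδle : δ ≤ ‖ρ θstar - ρ θh‖ := hθ₁min hθhS
    have hr : ‖ρhat n ω - ρ θstar‖ < r₀ := by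
      rwa [← dist_eq_norm]
    have htri : ‖ρ θstar - ρ θh‖ ≤ ‖ρ θstar - ρhat n ω‖ + ‖ρhat n ω - ρ θh‖ := by
      calc ‖ρ θstar - ρ θh‖ = ‖(ρ θstar - ρhat n ω) + (ρhat n ω - ρ θh)‖ := by
            congr 1; abel
        _ ≤ ‖ρ θstar - ρhat n ω‖ + ‖ρhat n ω - ρ θh‖ := norm_add_le _ _
    have hnorm1 : ‖ρ θstar - ρhat n ω‖ = ‖ρhat n ω - ρ θstar‖ := norm_sub_rev _ _
    have hfar : δ / 2 ≤ ‖ρhat n ω - ρ θh‖ := by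
      rw [hnorm1] at htri
      have : δ - r₀ ≤ ‖ρhat n ω - ρ θh‖ := by linarith
      linarith
    have hQlow : c * (δ / 2) ^ 2
        ≤ (ρhat n ω - ρ θh) ⬝ᵥ (V θh) *ᵥ (ρhat n ω - ρ θh) := by
      have hsq : (δ / 2) ^ 2 ≤ ‖ρhat n ω - ρ θh‖ ^ 2 := by
        apply pow_le_pow_left₀ (by linarith) hfar
      calc c * (δ / 2) ^ 2 ≤ c * ‖ρhat n ω - ρ θh‖ ^ 2 :=
            mul_le_mul_of_nonneg_left hsq hcpos.le
        _ ≤ (ρhat n ω - ρ θh) ⬝ᵥ (V θh) *ᵥ (ρhat n ω - ρ θh) :=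
            hcoer θh (hmem n ω) _
    have hQhigh : (ρhat n ω - ρ θstar) ⬝ᵥ (V θstar) *ᵥ (ρhat n ω - ρ θstar)
        ≤ C * r₀ ^ 2 := by
      calc (ρhat n ω - ρ θstar) ⬝ᵥ (V θstar) *ᵥ (ρhat n ω - ρ θstar)
          ≤ C * ‖ρhat n ω - ρ θstar‖ ^ 2 := hCbound _
        _ ≤ C * r₀ ^ 2 := by
            apply mul_le_mul_of_nonneg_left _ hCnonneg
            apply pow_le_pow_left₀ (norm_nonneg _) hr.le
    have := hmin n ω θstar hθstar
    have : c * (δ / 2) ^ 2 ≤ C * r₀ ^ 2 := by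
      calc c * (δ / 2) ^ 2
          ≤ (ρhat n ω - ρ θh) ⬝ᵥ (V θh) *ᵥ (ρhat n ω - ρ θh) := hQlow
        _ ≤ (ρhat n ω - ρ θstar) ⬝ᵥ (V θstar) *ᵥ (ρhat n ω - ρ θstar) :=
            hmin n ω θstar hθstar
        _ ≤ C * r₀ ^ 2 := hQhigh
    linarith
  -- conclude via the union bound and (G1)
  have hbound : ∀ n, μ {ω | ε ≤ dist (θhat n ω) θstar}
      ≤ ∑ i : Fin p, μ {ω | r₀ ≤ dist (ρhat n ω i) (ρ θstar i)} := by
    intro n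
    calc μ {ω | ε ≤ dist (θhat n ω) θstar}
        ≤ μ (⋃ i : Fin p, {ω | r₀ ≤ dist (ρhat n ω i) (ρ θstar i)}) :=
          measure_mono (hsubset n)
      _ ≤ ∑' i : Fin p, μ {ω | r₀ ≤ dist (ρhat n ω i) (ρ θstar i)} :=
          measure_iUnion_le _
      _ = ∑ i : Fin p, μ {ω | r₀ ≤ dist (ρhat n ω i) (ρ θstar i)} := tsum_fintype _
  have hsum : Filter.Tendsto
      (fun n => ∑ i : Fin p, μ {ω | r₀ ≤ dist (ρhat n ω i) (ρ θstar i)})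
      Filter.atTop (nhds 0) := by
    have h := Filter.Tendsto.congr' (Filter.EventuallyEq.refl _ _)
      (tendsto_finset_sum (Finset.univ : Finset (Fin p))
        (fun i _ => tendstoInMeasure_iff_dist.mp (hG1 i) r₀ hr₀pos))
    simpa using h
  exact tendsto_of_tendsto_of_tendsto_of_le_of_le tendsto_const_nhds hsum
    (fun n => zero_le) hbound
end

section
/- Let p ≥ k ≥ 1, let P ∈ ℝ^{p×k} have rank k, and let Π ∈ ℝ^{p×p} be symmetric positive definite. Then PᵀΠ⁻¹P is invertible. Moreover, for every symmetric matrix W ∈ ℝ^{p×p} such that PᵀWP is invertible, define Π_W := (PᵀWP)⁻¹ PᵀW Π W P (PᵀWP)⁻¹. Then Π_W − (PᵀΠ⁻¹P)⁻¹ is positive semidefinite, and Π_{Π⁻¹} = (PᵀΠ⁻¹P)⁻¹; that is, the choice W = Π⁻¹ minimizes Π_W in the positive semidefinite order. (The asymptotic optimality of the weight matrix V(θ) = Π(θ)⁻¹ for the generalised least squares estimator, asserted in Remark 4.4: with W = V + Vᵀ, the resulting asymptotic covariance matrix Π_V of the GLSE satisfies that Π_{V'} − Π_V is positive semidefinite for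 all valid weight matrices V'.) -/
open Matrix

open Module


variable {p k : ℕ}

lemma aux_inj (P : Matrix (Fin p) (Fin k) ℝ) (hP : P.rank = k) :
    Function.Injective P.mulVecLin := by
  rw [← LinearMap.ker_eq_bot]
  have h1 := P.mulVecLin.finrank_range_add_finrank_ker
  have h2 : finrank ℝ (Fin k → ℝ) = k := by simp
  rw [h2] at h1
  have h3 : finrank ℝ (LinearMap.range P.mulVecLin) = k := hP
  rw [h3] at h1
  have h4 : finrank ℝ (LinearMap.ker P.mulVecLin) = 0 := by omega
  exact Submodule.finrank_eq_zero.mp h4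

lemma aux_posdef (P : Matrix (Fin p) (Fin k) ℝ) (hP : P.rank = k)
    (T : Matrix (Fin p) (Fin p) ℝ) (hT : T.PosDef) : (Pᵀ * T * P).PosDef := by
  refine PosDef.of_dotProduct_mulVec_pos ?_ ?_
  · have := isHermitian_conjTranspose_mul_mul P hT.isHermitian
    rwa [conjTranspose_eq_transpose_of_trivial] at this
  · intro x hx
    have hPx : P *ᵥ x ≠ 0 := by
      intro h
      exact hx (aux_inj P hP (by simpa using h))
    have := hT.dotProduct_mulVec_pos hPx
    simpa [star_trivial, ← mulVec_mulVec, dotProduct_mulVec, vecMul_transpose] using this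

/-- Asymptotic optimality of the weight matrix `W = Π⁻¹` for the generalised least squares
estimator (Remark 4.4 of "Generalised least squares estimation of regularly varying space-time
processes"): `PᵀΠ⁻¹P` is invertible, `Π_W − (PᵀΠ⁻¹P)⁻¹` is positive semidefinite for every
admissible symmetric `W`, and `Π_{Π⁻¹} = (PᵀΠ⁻¹P)⁻¹`. -/
theorem glse_optimal_weight {p k : ℕ} (hk : 1 ≤ k) (hpk : k ≤ p)
    (P : Matrix (Fin p) (Fin k) ℝ) (hP : P.rank = k)
    (S : Matrix (Fin p) (Fin p) ℝ) (hS : S.PosDef) :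
    IsUnit (Pᵀ * S⁻¹ * P)
      ∧ (∀ W : Matrix (Fin p) (Fin p) ℝ, W.IsHermitian → IsUnit (Pᵀ * W * P) →
          ((Pᵀ * W * P)⁻¹ * Pᵀ * W * S * W * P * (Pᵀ * W * P)⁻¹
            - (Pᵀ * S⁻¹ * P)⁻¹).PosSemidef)
      ∧ (Pᵀ * S⁻¹ * P)⁻¹ * Pᵀ * S⁻¹ * S * S⁻¹ * P * (Pᵀ * S⁻¹ * P)⁻¹
          = (Pᵀ * S⁻¹ * P)⁻¹ := by
  have hSi : (S⁻¹).PosDef := hS.inv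
  have hG0 : (Pᵀ * S⁻¹ * P).PosDef := aux_posdef P hP S⁻¹ hSi
  have hG0u : IsUnit (Pᵀ * S⁻¹ * P) :=
    (isUnit_iff_isUnit_det _).mpr hG0.det_pos.ne'.isUnit
  set G0 : Matrix (Fin k) (Fin k) ℝ := Pᵀ * S⁻¹ * P with hG0def
  have hG0d : IsUnit G0.det := (isUnit_iff_isUnit_det _).mp hG0u
  have hSd : IsUnit S.det := hS.det_pos.ne'.isUnit
  have hSS : S * S⁻¹ = 1 := mul_nonsing_inv S hSd
  have hSiS : S⁻¹ * S = 1 := nonsing_inv_mul S hSd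
  have hG0G0 : G0⁻¹ * G0 = 1 := nonsing_inv_mul G0 hG0d
  have hG0G0' : G0 * G0⁻¹ = 1 := mul_nonsing_inv G0 hG0d
  have hSt : Sᵀ = S := by
    rw [← conjTranspose_eq_transpose_of_trivial]; exact hS.isHermitian
  have hSit : (S⁻¹)ᵀ = S⁻¹ := by rw [transpose_nonsing_inv, hSt]
  have hG0t : G0ᵀ = G0 := by
    rw [hG0def]; simp only [transpose_mul, transpose_transpose, hSit, Matrix.mul_assoc]
  have hG0it : (G0⁻¹)ᵀ = G0⁻¹ := by rw [transpose_nonsing_inv, hG0t]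
  -- the B matrix
  set B : Matrix (Fin k) (Fin p) ℝ := G0⁻¹ * Pᵀ * S⁻¹ with hBdef
  have hBt : Bᵀ = S⁻¹ * P * G0⁻¹ := by
    rw [hBdef]
    simp only [transpose_mul, transpose_transpose, hSit, hG0it, Matrix.mul_assoc]
  have e4 : B * S * Bᵀ = G0⁻¹ := by
    rw [hBdef, hBt]
    calc G0⁻¹ * Pᵀ * S⁻¹ * S * (S⁻¹ * P * G0⁻¹)
        = G0⁻¹ * (Pᵀ * (S⁻¹ * (S * (S⁻¹ * (P * G0⁻¹)))))  := by
          simp only [Matrix.mul_assoc]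
      _ = G0⁻¹ * (Pᵀ * (S⁻¹ * (P * G0⁻¹))) := by
          rw [← Matrix.mul_assoc S, hSS, Matrix.one_mul]
      _ = G0⁻¹ * G0 * G0⁻¹ := by rw [hG0def]; simp only [Matrix.mul_assoc]
      _ = G0⁻¹ := by rw [hG0G0, Matrix.one_mul]
  refine ⟨hG0u, fun W hW hWu => ?_, ?_⟩
  · have hWd : IsUnit (Pᵀ * W * P).det := (isUnit_iff_isUnit_det _).mp hWu
    set G : Matrix (Fin k) (Fin k) ℝ := Pᵀ * W * P with hGdef
    have hGG : G⁻¹ * G = 1 := nonsing_inv_mul G hWd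
    have hWt : Wᵀ = W := by
      rw [← conjTranspose_eq_transpose_of_trivial]; exact hW
    have hGt : Gᵀ = G := by
      rw [hGdef]; simp only [transpose_mul, transpose_transpose, hWt, Matrix.mul_assoc]
    have hGit : (G⁻¹)ᵀ = G⁻¹ := by rw [transpose_nonsing_inv, hGt]
    set A : Matrix (Fin k) (Fin p) ℝ := G⁻¹ * Pᵀ * W with hAdef
    have hAt : Aᵀ = W * P * G⁻¹ := by
      rw [hAdef]
      simp only [transpose_mul, transpose_transpose, hWt, hGit, Matrix.mul_assoc]
    have e1 : A * S * Aᵀ = G⁻¹ * Pᵀ * W * S * W * P * G⁻¹ := by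
      rw [hAdef, hAt]; simp only [Matrix.mul_assoc]
    have e2 : A * S * Bᵀ = G0⁻¹ := by
      rw [hAdef, hBt]
      calc G⁻¹ * Pᵀ * W * S * (S⁻¹ * P * G0⁻¹)
          = G⁻¹ * (Pᵀ * (W * (S * (S⁻¹ * (P * G0⁻¹))))) := by
            simp only [Matrix.mul_assoc]
        _ = G⁻¹ * (Pᵀ * (W * (P * G0⁻¹))) := by
            rw [← Matrix.mul_assoc S, hSS, Matrix.one_mul]
        _ = G⁻¹ * G * G0⁻¹ := by rw [hGdef]; simp only [Matrix.mul_assoc]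
        _ = G0⁻¹ := by rw [hGG, Matrix.one_mul]
    have e3 : B * S * Aᵀ = G0⁻¹ := by
      rw [hBdef, hAt]
      calc G0⁻¹ * Pᵀ * S⁻¹ * S * (W * P * G⁻¹)
          = G0⁻¹ * (Pᵀ * (S⁻¹ * (S * (W * (P * G⁻¹))))) := by
            simp only [Matrix.mul_assoc]
        _ = G0⁻¹ * (Pᵀ * (W * (P * G⁻¹))) := by
            rw [← Matrix.mul_assoc S⁻¹, hSiS, Matrix.one_mul]
        _ = G0⁻¹ * (G * G⁻¹) := by rw [hGdef]; simp only [Matrix.mul_assoc]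
        _ = G0⁻¹ := by rw [mul_nonsing_inv G hWd, Matrix.mul_one]
    have key : (A - B) * S * (A - B)ᵀ
        = G⁻¹ * Pᵀ * W * S * W * P * G⁻¹ - G0⁻¹ := by
      rw [transpose_sub]
      simp only [Matrix.sub_mul, Matrix.mul_sub]
      rw [e1, e2, e3, e4]
      abel
    rw [← key]
    have := hS.posSemidef.mul_mul_conjTranspose_same (A - B)
    rwa [conjTranspose_eq_transpose_of_trivial] at this
  · have : G0⁻¹ * Pᵀ * S⁻¹ * S * S⁻¹ * P * G0⁻¹ = B * S * Bᵀ := by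
      rw [hBdef, hBt]; simp only [Matrix.mul_assoc]
    rw [this, e4]
end
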